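/- arXiv:1305.1886 — 2 statements merged into one kernel-verified Lean document; each statement's English description precedes it below -/
import Mathlib

section
/- Let H, N, Ω be real n×n matrices with H symmetric, N diagonal, Ω skew-symmetric, and suppose ad_Ω H = [Ω,H] ≠ 0 and ad_Ω N = [Ω,N] ≠ 0. Define φ(t) = tr( e^{-Ωt} H e^{Ωt} N ). If φ'(0) > 0, then φ'(t) ≥ 0 for all t in [0, 2 tr(HΩN) / (‖[Ω,H]‖ ‖[Ω,N]‖)], where ‖·‖ is the Frobenius norm. -/
/-!
Writing `X t = e^{-Ωt} H e^{Ωt}`, one has `X' = [X, Ω]`, so moving the commutator across the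
trace gives `φ' t = tr (X t [Ω,N])` and `φ'' t = tr (e^{-Ωt} [H,Ω] e^{Ωt} [Ω,N])`. Since `e^{Ωt}` is
orthogonal, conjugation by it preserves the Frobenius norm, and Cauchy–Schwarz bounds `|φ''|` by
`L = ‖[Ω,H]‖ ‖[Ω,N]‖`. Hence `φ' t ≥ φ' 0 - L t = 2 tr (HΩN) - L t`, which is nonnegative on the
stated interval; the symmetry of `H` and `N` is what makes `φ' 0 = 2 tr (HΩN)`.
-/

open Matrix

noncomputable def frobNorm {n : ℕ} (A : Matrix (Fin n) (Fin n) ℝ) : ℝ :=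
  Real.sqrt (∑ i, ∑ j, A i j ^ 2)

section Frobenius

variable {n : ℕ}

theorem frobNorm_pos {A : Matrix (Fin n) (Fin n) ℝ} (hA : A ≠ 0) : 0 < frobNorm A := by
  obtain ⟨i, j, hij⟩ : ∃ i j, A i j ≠ 0 := by
    by_contra! h
    exact hA (Matrix.ext h)
  refine Real.sqrt_pos.2 <| Finset.sum_pos' (fun _ _ => by positivity) ⟨i, Finset.mem_univ _, ?_⟩
  exact Finset.sum_pos' (fun _ _ => by positivity) ⟨j, Finset.mem_univ _, by positivity⟩

theorem frobNorm_neg (A : Matrix (Fin n) (Fin n) ℝ) : frobNorm (-A) = frobNorm A := by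
  simp [frobNorm]

theorem frobNorm_sub_comm (A B : Matrix (Fin n) (Fin n) ℝ) :
    frobNorm (A - B) = frobNorm (B - A) := by
  rw [← neg_sub, frobNorm_neg]

theorem frobNorm_eq_sqrt_trace_mul_transpose (A : Matrix (Fin n) (Fin n) ℝ) :
    frobNorm A = √(A * Aᵀ).trace := by
  simp [frobNorm, Matrix.trace, Matrix.mul_apply, sq]

theorem abs_trace_mul_le_frobNorm_mul (C D : Matrix (Fin n) (Fin n) ℝ) :
    |(C * D).trace| ≤ frobNorm C * frobNorm D := by
  have htrace : (C * D).trace = ∑ p : Fin n × Fin n, C p.1 p.2 * D p.2 p.1 := by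
    simp [Fintype.sum_prod_type, Matrix.trace, Matrix.mul_apply]
  have hD : ∑ i, ∑ j, D i j ^ 2 = ∑ p : Fin n × Fin n, D p.2 p.1 ^ 2 := by
    rw [Fintype.sum_prod_type, Finset.sum_comm]
  rw [htrace, frobNorm, frobNorm, hD, ← Fintype.sum_prod_type', ← Real.sqrt_mul
    (Finset.sum_nonneg fun _ _ => sq_nonneg _)]
  exact Real.abs_le_sqrt (Finset.sum_mul_sq_le_sq_mul_sq _ _ _)

theorem frobNorm_transpose_mul_mul {U : Matrix (Fin n) (Fin n) ℝ} (hU : U * Uᵀ = 1)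
    (A : Matrix (Fin n) (Fin n) ℝ) : frobNorm (Uᵀ * A * U) = frobNorm A := by
  have hUUA : ∀ X : Matrix (Fin n) (Fin n) ℝ, U * (Uᵀ * X) = X := fun X => by
    rw [← Matrix.mul_assoc, hU, Matrix.one_mul]
  rw [frobNorm_eq_sqrt_trace_mul_transpose, frobNorm_eq_sqrt_trace_mul_transpose,
    Matrix.transpose_mul, Matrix.transpose_mul, Matrix.transpose_transpose]
  simp only [Matrix.mul_assoc, hUUA]
  rw [Matrix.trace_mul_comm, Matrix.mul_assoc, Matrix.mul_assoc, hU, Matrix.mul_one]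

end Frobenius

section Commutator

variable {m R : Type*} [Fintype m] [CommRing R]

theorem trace_commutator_mul (X Ω M : Matrix m m R) :
    ((X * Ω - Ω * X) * M).trace = (X * (Ω * M - M * Ω)).trace := by
  rw [Matrix.sub_mul, Matrix.mul_sub, Matrix.trace_sub, Matrix.trace_sub, Matrix.mul_assoc,
    Matrix.mul_assoc, Matrix.trace_mul_comm Ω, Matrix.mul_assoc]

theorem trace_mul_commutator_eq_two_mul {H Ω N : Matrix m m R} (hH : H.IsSymm) (hN : N.IsSymm)
    (hΩ : Ωᵀ = -Ω) : (H * (Ω * N - N * Ω)).trace = 2 * (H * Ω * N).trace := by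
  have hskew : (H * (N * Ω)).trace = -(H * Ω * N).trace := by
    rw [← Matrix.trace_transpose, Matrix.transpose_mul, Matrix.transpose_mul, hΩ, hN.eq, hH.eq,
      Matrix.neg_mul, Matrix.neg_mul, Matrix.trace_neg, Matrix.trace_mul_cycle, Matrix.mul_assoc]
  rw [Matrix.mul_sub, Matrix.trace_sub, hskew, Matrix.mul_assoc]
  ring

end Commutator

section ExpConj

variable {m : Type*} [Fintype m] [DecidableEq m]

noncomputable def expConj (Ω B : Matrix m m ℝ) (t : ℝ) : Matrix m m ℝ :=
  NormedSpace.exp (-(t • Ω)) * B * NormedSpace.exp (t • Ω)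

variable (Ω B : Matrix m m ℝ)

theorem expConj_zero : expConj Ω B 0 = B := by
  simp [expConj]

theorem expConj_commutator (t : ℝ) :
    expConj Ω (B * Ω - Ω * B) t = expConj Ω B t * Ω - Ω * expConj Ω B t := by
  have hpos : Commute Ω (NormedSpace.exp (t • Ω)) := ((Commute.refl Ω).smul_right t).exp_right
  have hneg : Commute Ω (NormedSpace.exp (-(t • Ω))) :=
    ((Commute.refl Ω).smul_right t).neg_right.exp_right
  simp only [expConj, Matrix.mul_sub, Matrix.sub_mul, Matrix.mul_assoc, hpos.eq]
  simp only [← Matrix.mul_assoc, hneg.eq]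

section Calculus

-- Any matrix norm would do here: all of them induce the product topology used by `exp`.
attribute [local instance] Matrix.linftyOpNormedAddCommGroup Matrix.linftyOpNormedRing
  Matrix.linftyOpNormedAlgebra

theorem hasDerivAt_expConj (t : ℝ) :
    HasDerivAt (expConj Ω B) (expConj Ω (B * Ω - Ω * B) t) t := by
  have hneg := (hasDerivAt_exp_smul_const' Ω (-t)).scomp t (hasDerivAt_neg t)
  simp only [Function.comp_def, neg_smul, one_smul] at hneg
  refine ((hneg.mul_const B).mul (hasDerivAt_exp_smul_const Ω t)).congr_deriv ?_
  rw [expConj_commutator]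
  simp only [expConj, Matrix.neg_mul, Matrix.mul_assoc]
  exact neg_add_eq_sub _ _

theorem hasDerivAt_trace_expConj_mul (M : Matrix m m ℝ) (t : ℝ) :
    HasDerivAt (fun u => (expConj Ω B u * M).trace) ((expConj Ω (B * Ω - Ω * B) t * M).trace) t :=
  (Matrix.traceLinearMap m ℝ ℝ).toContinuousLinearMap.hasFDerivAt.comp_hasDerivAt t
    ((hasDerivAt_expConj Ω B t).mul_const M)

end Calculus

theorem expConj_eq_transpose_mul_mul {Ω : Matrix m m ℝ} (hΩ : Ωᵀ = -Ω) (B : Matrix m m ℝ)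
    (t : ℝ) : expConj Ω B t = (NormedSpace.exp (t • Ω))ᵀ * B * NormedSpace.exp (t • Ω) := by
  rw [expConj, ← Matrix.exp_transpose, Matrix.transpose_smul, hΩ, smul_neg]

theorem exp_smul_mul_transpose_of_transpose_eq_neg {Ω : Matrix m m ℝ} (hΩ : Ωᵀ = -Ω) (t : ℝ) :
    NormedSpace.exp (t • Ω) * (NormedSpace.exp (t • Ω))ᵀ = 1 := by
  rw [← Matrix.exp_transpose, Matrix.transpose_smul, hΩ, smul_neg, ← Matrix.exp_add_of_commute
    _ _ ((Commute.refl Ω).smul_left t |>.smul_right t |>.neg_right), add_neg_cancel,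
    NormedSpace.exp_zero]

end ExpConj

theorem frobNorm_expConj {n : ℕ} {Ω : Matrix (Fin n) (Fin n) ℝ} (hΩ : Ωᵀ = -Ω)
    (B : Matrix (Fin n) (Fin n) ℝ) (t : ℝ) : frobNorm (expConj Ω B t) = frobNorm B := by
  rw [expConj_eq_transpose_mul_mul hΩ,
    frobNorm_transpose_mul_mul (exp_smul_mul_transpose_of_transpose_eq_neg hΩ t)]

theorem brockett_step_size_estimate_general (n : ℕ)
    (H N Ω : Matrix (Fin n) (Fin n) ℝ)
    (hH : H.IsSymm) (hN : N.IsDiag) (hΩ : Ωᵀ = -Ω)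
    (hadH : Ω * H - H * Ω ≠ 0) (hadN : Ω * N - N * Ω ≠ 0)
    (φ : ℝ → ℝ)
    (hφ : ∀ t, φ t = (NormedSpace.exp (-(t • Ω)) * H * NormedSpace.exp (t • Ω) * N).trace) :
    ∀ t ∈ Set.Icc (0 : ℝ)
        (2 * (H * Ω * N).trace / (frobNorm (Ω * H - H * Ω) * frobNorm (Ω * N - N * Ω))),
      0 ≤ deriv φ t := by
  have hφ_eq : φ = fun t => (expConj Ω H t * N).trace := funext hφ
  set L := frobNorm (Ω * H - H * Ω) * frobNorm (Ω * N - N * Ω)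
  have hL : 0 < L := mul_pos (frobNorm_pos hadH) (frobNorm_pos hadN)
  set ψ := fun t => (expConj Ω H t * (Ω * N - N * Ω)).trace
  have hφ' : ∀ t, deriv φ t = ψ t := fun t => by
    rw [hφ_eq, (hasDerivAt_trace_expConj_mul Ω H N t).deriv, expConj_commutator,
      trace_commutator_mul]
  have hψ' := hasDerivAt_trace_expConj_mul Ω H (Ω * N - N * Ω)
  have hψ'_ge : ∀ t, -L ≤ deriv ψ t := fun t => by
    have hbound := abs_trace_mul_le_frobNorm_mul (expConj Ω (H * Ω - Ω * H) t) (Ω * N - N * Ω)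
    rw [frobNorm_expConj hΩ, frobNorm_sub_comm] at hbound
    exact (hψ' t).deriv ▸ neg_le_of_abs_le hbound
  have hψ0 : ψ 0 = 2 * (H * Ω * N).trace := by
    simp only [ψ, expConj_zero]
    exact trace_mul_commutator_eq_two_mul hH hN.isSymm hΩ
  rintro t ⟨ht0, htL⟩
  have hgrowth := mul_sub_le_image_sub_of_le_deriv (fun t => (hψ' t).differentiableAt) hψ'_ge ht0
  have hLt : L * t ≤ 2 * (H * Ω * N).trace := (le_div_iff₀' hL).1 htL
  rw [hφ']
  linarith

theorem brockett_step_size_estimate (n : ℕ)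
    (H N Ω : Matrix (Fin n) (Fin n) ℝ)
    (hH : H.IsSymm) (hN : N.IsDiag) (hΩ : Ωᵀ = -Ω)
    (hadH : Ω * H - H * Ω ≠ 0) (hadN : Ω * N - N * Ω ≠ 0)
    (φ : ℝ → ℝ)
    (hφ : ∀ t, φ t = (NormedSpace.exp (-(t • Ω)) * H * NormedSpace.exp (t • Ω) * N).trace)
    (hφ'0 : 0 < deriv φ 0) :
    ∀ t ∈ Set.Icc (0 : ℝ)
        (2 * (H * Ω * N).trace / (frobNorm (Ω * H - H * Ω) * frobNorm (Ω * N - N * Ω))),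
      0 ≤ deriv φ t :=
  brockett_step_size_estimate_general n H N Ω hH hN hΩ hadH hadN φ hφ
end

section
/- Let Q be symmetric and N diagonal, Θ ∈ SO(n), H = Θ^T Q Θ. Then the bilinear form L(X,Y) = -tr( ([H, [X,N]] - [[X,H], N]) Y ) on so(n) × so(n) is symmetric: L(X,Y) = L(Y,X) for all skew-symmetric X, Y. -/
open Matrix

theorem second_covariant_differential_symmetric (n : ℕ)
    (Q N Θ : Matrix (Fin n) (Fin n) ℝ)
    (hQ : Q.IsSymm) (hN : N.IsDiag)
    (hΘorth : Θᵀ * Θ = 1) (hΘdet : Θ.det = 1)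
    (H : Matrix (Fin n) (Fin n) ℝ) (hH : H = Θᵀ * Q * Θ)
    (L : Matrix (Fin n) (Fin n) ℝ → Matrix (Fin n) (Fin n) ℝ → ℝ)
    (hL : ∀ X Y, L X Y =
      -(((H * (X * N - N * X) - (X * N - N * X) * H)
          - ((X * H - H * X) * N - N * (X * H - H * X))) * Y).trace) :
    ∀ X Y : Matrix (Fin n) (Fin n) ℝ, Xᵀ = -X → Yᵀ = -Y → L X Y = L Y X := by
  intro X Y hX hY
  have hHs : Hᵀ = H := by
    rw [hH]
    simp [Matrix.transpose_mul, Matrix.mul_assoc, hQ.eq]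
  have hNs : Nᵀ = N := hN.isSymm.eq
  have flip : ∀ A B C D : Matrix (Fin n) (Fin n) ℝ,
      (A * B * C * D).trace = (Dᵀ * Cᵀ * Bᵀ * Aᵀ).trace := by
    intro A B C D
    rw [← Matrix.trace_transpose (A * B * C * D)]
    simp [Matrix.transpose_mul, Matrix.mul_assoc]
  have cyc : ∀ A B C D : Matrix (Fin n) (Fin n) ℝ,
      (A * B * C * D).trace = (D * A * B * C).trace := by
    intro A B C D
    rw [Matrix.trace_mul_comm (A * B * C) D]
    simp [Matrix.mul_assoc]
  have i1 : (H * X * N * Y).trace = (H * Y * N * X).trace := by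
    rw [flip, hHs, hNs, hX, hY]
    simp only [Matrix.neg_mul, Matrix.mul_neg, neg_neg, Matrix.trace_neg]
    rw [cyc]
  have i2 : (N * X * H * Y).trace = (N * Y * H * X).trace := by
    rw [flip, hHs, hNs, hX, hY]
    simp only [Matrix.neg_mul, Matrix.mul_neg, neg_neg, Matrix.trace_neg]
    rw [cyc]
  have i3 : (X * N * H * Y).trace = (H * N * X * Y).trace := by
    rw [flip, hHs, hNs, hX, hY]
    simp only [Matrix.neg_mul, Matrix.mul_neg, neg_neg, Matrix.trace_neg]
    rw [cyc, cyc, cyc]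
  have i4 : (X * H * N * Y).trace = (N * H * X * Y).trace := by
    rw [flip, hHs, hNs, hX, hY]
    simp only [Matrix.neg_mul, Matrix.mul_neg, neg_neg, Matrix.trace_neg]
    rw [cyc, cyc, cyc]
  have i3' : (Y * N * H * X).trace = (H * N * Y * X).trace := by
    rw [flip, hHs, hNs, hX, hY]
    simp only [Matrix.neg_mul, Matrix.mul_neg, neg_neg, Matrix.trace_neg]
    rw [cyc, cyc, cyc]
  have i4' : (Y * H * N * X).trace = (N * H * Y * X).trace := by
    rw [flip, hHs, hNs, hX, hY]
    simp only [Matrix.neg_mul, Matrix.mul_neg, neg_neg, Matrix.trace_neg]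
    rw [cyc, cyc, cyc]
  have i5 : (H * N * X * Y).trace = (N * H * Y * X).trace := by
    rw [flip, hHs, hNs, hX, hY]
    simp only [Matrix.neg_mul, Matrix.mul_neg, neg_neg, Matrix.trace_neg]
    rw [cyc, cyc]
  have i6 : (N * H * X * Y).trace = (H * N * Y * X).trace := by
    rw [flip, hHs, hNs, hX, hY]
    simp only [Matrix.neg_mul, Matrix.mul_neg, neg_neg, Matrix.trace_neg]
    rw [cyc, cyc]
  rw [hL, hL]
  simp only [Matrix.sub_mul, Matrix.mul_sub, Matrix.trace_sub, ← Matrix.mul_assoc]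
  linarith [i1, i2, i3, i4, i3', i4', i5, i6]
end
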